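/- For every positive integer n, the kromatic quasisymmetric function of the complete graph satisfies L̄_{K_n}(q) = [n]_q! · Σ_{r ≥ n} {r brace n} e_r, as an identity of formal power series in x_1,x_2,... with coefficients in ℤ[q]. -/

import Mathlib

/-!
STATEMENT 2: For every positive integer `n`,
`L̄_{K_n}(q) = [n]_q! · Σ_{r ≥ n} {r brace n} e_r`, as formal power series in
`x_1, x_2, …` with coefficients in `ℤ[q]`.
-/

open scoped Classical
noncomputable section

/-- `m` is the monomial `x^κ` of the set-valued coloring `κ`. -/
def MonoMatch {W : Type*} (κ : W → Finset ℕ+) (m : ℕ+ →₀ ℕ) : Prop :=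
  ∀ i : ℕ+, m i = Nat.card {w : W // i ∈ κ w}

/-- A proper set-valued coloring. -/
def IsProperSV {V : Type*} (G : SimpleGraph V) (κ : V → Finset ℕ+) : Prop :=
  (∀ v, (κ v).Nonempty) ∧ ∀ ⦃u v⦄, G.Adj u v → Disjoint (κ u) (κ v)

/-- The number of ascents of `f : V → ℙ` in the ordered graph `G`:
edges `{u,v}` with `u < v` and `f u < f v`. -/
def ascNum {V : Type*} [Preorder V] (G : SimpleGraph V) (f : V → ℕ+) : ℕ :=
  Nat.card {p : V × V // G.Adj p.1 p.2 ∧ p.1 < p.2 ∧ f p.1 < f p.2}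

/-- The maximum of a finite set of positive integers (junk value `1` on `∅`). -/
def maxColor (s : Finset ℕ+) : ℕ+ := WithBot.unbotD 1 s.max

/-- The kromatic quasisymmetric function
`L̄_G(q) = Σ_κ q^{asc_G(max∘κ)} x^κ`, defined coefficientwise in the `x` variables:
the coefficient of a monomial `m` is the polynomial `Σ_κ q^{asc_G(max∘κ)}` over the
(finitely many) proper set-valued colorings `κ` with monomial `m`. -/
def kqL {V : Type*} [Preorder V] (G : SimpleGraph V) :
    MvPowerSeries ℕ+ (Polynomial ℤ) :=
  fun m => ∑ᶠ κ : {κ : V → Finset ℕ+ // IsProperSV G κ ∧ MonoMatch κ m},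
    (Polynomial.X : Polynomial ℤ) ^ ascNum G (fun v => maxColor (κ.1 v))

/-- The `q`-factorial `[n]_q! = ∏_{i=1}^n (1 + q + ⋯ + q^{i-1})` in `ℤ[q]`. -/
def qFactorial (n : ℕ) : Polynomial ℤ :=
  ∏ i ∈ Finset.range n, ∑ j ∈ Finset.range (i + 1), Polynomial.X ^ j

/-- The Stirling number of the second kind `{r brace n}`. -/
def stirling2 (r n : ℕ) : ℕ :=
  Nat.card {P : Finpartition (Finset.univ : Finset (Fin r)) // P.parts.card = n}

/-- The elementary symmetric function `e_k`, with coefficients in `ℤ[q]`. -/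
def elemSymP (k : ℕ) : MvPowerSeries ℕ+ (Polynomial ℤ) :=
  fun m => if (∀ i, m i ≤ 1) ∧ m.support.card = k then 1 else 0

open Finset

/-- ascent statistic of a tuple. -/
def ascF {k : ℕ} {α : Type*} [LinearOrder α] (f : Fin k → α) : ℕ :=
  (Finset.univ.filter fun p : Fin k × Fin k => p.1 < p.2 ∧ f p.1 < f p.2).card

lemma ascF_comp {k : ℕ} {α : Type*} [LinearOrder α] {f : Fin k → α}
    (hf : StrictMono f) (σ : Fin k → Fin k) :
    ascF (fun v => f (σ v)) = ascF σ := by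
  unfold ascF
  congr 1
  apply Finset.filter_congr
  intro p _
  simp [hf.lt_iff_lt]

/-- the insertion map on permutations -/
def permIns {k : ℕ} (p : Fin (k + 1)) (e : Equiv.Perm (Fin k)) : Equiv.Perm (Fin (k + 1)) :=
  (finSuccEquiv' (Fin.last k)).trans ((Equiv.optionCongr e).trans (finSuccEquiv' p).symm)

lemma permIns_last {k : ℕ} (p : Fin (k + 1)) (e : Equiv.Perm (Fin k)) :
    permIns p e (Fin.last k) = p := by
  simp [permIns]

lemma permIns_castSucc {k : ℕ} (p : Fin (k + 1)) (e : Equiv.Perm (Fin k)) (i : Fin k) :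
    permIns p e (Fin.castSucc i) = p.succAbove (e i) := by
  simp [permIns, finSuccEquiv'_last_apply_castSucc]

lemma permIns_bijective {k : ℕ} :
    Function.Bijective (fun pe : Fin (k + 1) × Equiv.Perm (Fin k) => permIns pe.1 pe.2) := by
  rw [Fintype.bijective_iff_injective_and_card]
  constructor
  · rintro ⟨p, e⟩ ⟨p', e'⟩ h
    simp only at h
    have hp : p = p' := by
      rw [← permIns_last p e, ← permIns_last p' e', h]
    subst hp
    have he : e = e' := Equiv.ext fun i => by
      have := congrArg (fun σ : Equiv.Perm (Fin (k+1)) => σ (Fin.castSucc i)) h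
      simp only [permIns_castSucc] at this
      exact (Fin.strictMono_succAbove p).injective this
    rw [he]
  · simp [Fintype.card_perm, Nat.factorial_succ]

lemma card_filter_val_lt {k : ℕ} (c : ℕ) (hc : c ≤ k) :
    (Finset.univ.filter fun x : Fin k => (x : ℕ) < c).card = c := by
  have himg : (Finset.univ.filter fun x : Fin k => (x : ℕ) < c).image Fin.val
      = Finset.range c := by
    ext y
    simp only [Finset.mem_image, Finset.mem_filter, Finset.mem_univ, true_and,
      Finset.mem_range]
    constructor
    · rintro ⟨x, hx, rfl⟩; exact hx
    · intro hy; exact ⟨⟨y, lt_of_lt_of_le hy hc⟩, hy, rfl⟩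
  have := congrArg Finset.card himg
  rwa [Finset.card_image_of_injective _ Fin.val_injective, Finset.card_range] at this

lemma ascF_permIns {k : ℕ} (p : Fin (k + 1)) (e : Equiv.Perm (Fin k)) :
    ascF (⇑(permIns p e)) = (p : ℕ) + ascF ⇑e := by
  classical
  set σ := permIns p e with hσ
  unfold ascF
  rw [← Finset.card_filter_add_card_filter_not
    (p := fun q : Fin (k+1) × Fin (k+1) => q.2 = Fin.last k)]
  congr 1
  · -- pairs ending at last: count = p
    rw [Finset.filter_filter]
    rw [← card_filter_val_lt (p : ℕ) (by omega : (p:ℕ) ≤ k)]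
    symm
    apply Finset.card_bij (fun x _ => (Fin.castSucc (e.symm x), Fin.last k))
    · intro x hx
      simp only [Finset.mem_filter, Finset.mem_univ, true_and] at hx ⊢
      refine ⟨⟨Fin.castSucc_lt_last _, ?_⟩, trivial⟩
      rw [permIns_castSucc, Equiv.apply_symm_apply, permIns_last]
      rw [Fin.succAbove_lt_iff_castSucc_lt]
      exact hx
    · intro x hx y hy hxy
      have := congrArg Prod.fst hxy
      simp only at this
      exact e.symm.injective (Fin.castSucc_injective _ this)
    · rintro ⟨q1, q2⟩ hq
      simp only [Finset.mem_filter, Finset.mem_univ, true_and] at hq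
      obtain ⟨⟨h12, hlt⟩, h2⟩ := hq
      subst h2
      have h1 : q1 ≠ Fin.last k := Fin.ne_last_of_lt h12
      obtain ⟨i, rfl⟩ := Fin.exists_castSucc_eq.2 h1
      refine ⟨e i, ?_, ?_⟩
      · simp only [Finset.mem_filter, Finset.mem_univ, true_and]
        rw [permIns_castSucc, permIns_last, Fin.succAbove_lt_iff_castSucc_lt] at hlt
        exact hlt
      · simp
  · -- pairs not ending at last: count = ascF e
    rw [Finset.filter_filter]
    symm
    apply Finset.card_bij (fun q _ => (Fin.castSucc q.1, Fin.castSucc q.2))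
    · rintro ⟨i, j⟩ hq
      simp only [Finset.mem_filter, Finset.mem_univ, true_and] at hq ⊢
      obtain ⟨hij, hlt⟩ := hq
      refine ⟨⟨Fin.castSucc_lt_castSucc_iff.mpr hij, ?_⟩,
        Fin.ne_last_of_lt (Fin.castSucc_lt_last j)⟩
      rw [permIns_castSucc, permIns_castSucc, Fin.succAbove_lt_succAbove_iff]
      exact hlt
    · rintro ⟨i, j⟩ _ ⟨i', j'⟩ _ h
      have h1 := congrArg Prod.fst h
      have h2 := congrArg Prod.snd h
      simp only at h1 h2
      rw [Prod.ext_iff]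
      exact ⟨Fin.castSucc_injective _ h1, Fin.castSucc_injective _ h2⟩
    · rintro ⟨q1, q2⟩ hq
      simp only [Finset.mem_filter, Finset.mem_univ, true_and] at hq
      obtain ⟨⟨h12, hlt⟩, h2⟩ := hq
      obtain ⟨j, rfl⟩ := Fin.exists_castSucc_eq.2 h2
      have h1 : q1 ≠ Fin.last k := Fin.ne_last_of_lt h12
      obtain ⟨i, rfl⟩ := Fin.exists_castSucc_eq.2 h1
      refine ⟨(i, j), ?_, rfl⟩
      simp only [Finset.mem_filter, Finset.mem_univ, true_and]
      rw [permIns_castSucc, permIns_castSucc, Fin.succAbove_lt_succAbove_iff] at hlt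
      exact ⟨Fin.castSucc_lt_castSucc_iff.mp h12, hlt⟩

lemma sum_X_pow_ascF (k : ℕ) :
    ∑ σ : Equiv.Perm (Fin k), (Polynomial.X : Polynomial ℤ) ^ ascF ⇑σ = qFactorial k := by
  induction k with
  | zero =>
    have h1 : ∀ σ : Equiv.Perm (Fin 0), ascF ⇑σ = 0 := by
      intro σ
      simp [ascF, Finset.filter_eq_empty_iff]
    simp [h1, qFactorial]
  | succ k ih =>
    rw [← Fintype.sum_bijective _ permIns_bijective _
      (fun σ => (Polynomial.X : Polynomial ℤ) ^ ascF ⇑σ) (fun pe => rfl)]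
    have : ∀ pe : Fin (k+1) × Equiv.Perm (Fin k),
        (Polynomial.X : Polynomial ℤ) ^ ascF ⇑(permIns pe.1 pe.2)
          = Polynomial.X ^ (pe.1 : ℕ) * Polynomial.X ^ ascF ⇑pe.2 := by
      rintro ⟨p, e⟩
      rw [ascF_permIns, pow_add]
    rw [Finset.sum_congr rfl (fun pe _ => this pe), Fintype.sum_prod_type]
    dsimp only
    simp_rw [← Finset.mul_sum]
    rw [← Finset.sum_mul]
    rw [ih, Fin.sum_univ_eq_sum_range (fun i => (Polynomial.X : Polynomial ℤ) ^ i)]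
    unfold qFactorial
    rw [Finset.prod_range_succ]
    ring

lemma maxColor_eq_max' {t : Finset ℕ+} (h : t.Nonempty) : maxColor t = t.max' h := by
  rw [maxColor, ← Finset.coe_max' h]
  rfl

lemma maxColor_mem {t : Finset ℕ+} (h : t.Nonempty) : maxColor t ∈ t := by
  rw [maxColor_eq_max' h]; exact t.max'_mem h

lemma le_maxColor {t : Finset ℕ+} {i : ℕ+} (hi : i ∈ t) : i ≤ maxColor t := by
  rw [maxColor_eq_max' ⟨i, hi⟩]; exact t.le_max' i hi

lemma maxColor_eq {t : Finset ℕ+} {c : ℕ+} (hc : c ∈ t) (h : ∀ i ∈ t, i ≤ c) :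
    maxColor t = c :=
  le_antisymm (h _ (maxColor_mem ⟨c, hc⟩)) (le_maxColor hc)

def colorings (s : Finset ℕ+) (n : ℕ) : Finset (Fin n → Finset ℕ+) :=
  (Fintype.piFinset fun _ : Fin n => s.powerset).filter fun κ =>
    (∀ v, (κ v).Nonempty) ∧ (∀ u v : Fin n, u ≠ v → Disjoint (κ u) (κ v)) ∧
      ∀ i ∈ s, ∃ v, i ∈ κ v

lemma mem_colorings {s : Finset ℕ+} {n : ℕ} {κ : Fin n → Finset ℕ+} :
    κ ∈ colorings s n ↔ (∀ v, κ v ⊆ s) ∧ (∀ v, (κ v).Nonempty) ∧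
      (∀ u v : Fin n, u ≠ v → Disjoint (κ u) (κ v)) ∧ ∀ i ∈ s, ∃ v, i ∈ κ v := by
  simp only [colorings, Finset.mem_filter, Fintype.mem_piFinset, Finset.mem_powerset,
    and_assoc]

lemma colorings_comp {s : Finset ℕ+} {n : ℕ} {κ : Fin n → Finset ℕ+}
    (h : κ ∈ colorings s n) (σ : Equiv.Perm (Fin n)) :
    (fun v => κ (σ v)) ∈ colorings s n := by
  rw [mem_colorings] at h ⊢
  obtain ⟨h1, h2, h3, h4⟩ := h
  refine ⟨fun v => h1 _, fun v => h2 _,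
    fun u v huv => h3 _ _ (fun e => huv (σ.injective e)), fun i hi => ?_⟩
  obtain ⟨v, hv⟩ := h4 i hi
  exact ⟨σ.symm v, by simpa using hv⟩

lemma maxColor_injective {s : Finset ℕ+} {n : ℕ} {κ : Fin n → Finset ℕ+}
    (h : κ ∈ colorings s n) :
    Function.Injective fun v => maxColor (κ v) := by
  intro u v huv
  by_contra hne
  have h2 := (mem_colorings.mp h).2.1
  have h3 := (mem_colorings.mp h).2.2.1 u v hne
  have hu := maxColor_mem (h2 u)
  have hv := maxColor_mem (h2 v)
  simp only at huv
  rw [huv] at hu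
  exact Finset.disjoint_left.mp h3 hu hv

def scolorings (s : Finset ℕ+) (n : ℕ) : Finset (Fin n → Finset ℕ+) :=
  (colorings s n).filter fun κ => StrictMono fun v => maxColor (κ v)

lemma sum_colorings (s : Finset ℕ+) (n : ℕ) :
    ∑ κ ∈ colorings s n, (Polynomial.X : Polynomial ℤ) ^ ascF (fun v => maxColor (κ v))
      = (scolorings s n).card * qFactorial n := by
  have key : ∑ κ ∈ colorings s n,
      (Polynomial.X : Polynomial ℤ) ^ ascF (fun v => maxColor (κ v))
      = ∑ pe ∈ (scolorings s n) ×ˢ (Finset.univ : Finset (Equiv.Perm (Fin n))),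
        (Polynomial.X : Polynomial ℤ) ^ ascF ⇑pe.2 := by
    apply Finset.sum_bij'
      (i := fun κ (hκ : κ ∈ colorings s n) =>
        ((fun v => κ (Tuple.sort (fun v => maxColor (κ v)) v)),
          (Tuple.sort (fun v => maxColor (κ v)))⁻¹))
      (j := fun pe _ => fun v => pe.1 (pe.2 v))
    -- hi
    · intro κ hκ
      rw [Finset.mem_product]
      constructor
      · rw [scolorings, Finset.mem_filter]
        refine ⟨colorings_comp hκ _, ?_⟩
        apply Monotone.strictMono_of_injective
        · exact Tuple.monotone_sort (fun v => maxColor (κ v))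
        · exact (maxColor_injective hκ).comp (Tuple.sort (fun v => maxColor (κ v))).injective
      · exact Finset.mem_univ _
    -- hj
    · intro pe hpe
      rw [Finset.mem_product, scolorings, Finset.mem_filter] at hpe
      exact colorings_comp hpe.1.1 pe.2
    -- left_inv
    · intro κ hκ
      funext v
      simp
    -- right_inv
    · intro pe hpe
      rw [Finset.mem_product, scolorings, Finset.mem_filter] at hpe
      obtain ⟨⟨hc, hsm⟩, -⟩ := hpe
      have hinj : Function.Injective fun v => maxColor (pe.1 v) := maxColor_injective hc
      -- the sort of the composed tuple is pe.2⁻¹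
      have hsort : Tuple.sort (fun v => maxColor (pe.1 (pe.2 v))) = pe.2⁻¹ := by
        have hmono : Monotone ((fun v => maxColor (pe.1 (pe.2 v))) ∘ ⇑pe.2⁻¹) := by
          have : ((fun v => maxColor (pe.1 (pe.2 v))) ∘ ⇑pe.2⁻¹)
              = fun v => maxColor (pe.1 v) := by
            funext v; simp
          rw [this]
          exact hsm.monotone
        have := (Tuple.comp_sort_eq_comp_iff_monotone
          (f := fun v => maxColor (pe.1 (pe.2 v))) (σ := pe.2⁻¹)).mpr hmono
        -- this : f ∘ pe.2⁻¹ = f ∘ sort f, with f injective-composed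
        ext v
        have h2 := congrFun this v
        simp only [Function.comp_apply] at h2
        have hinj2 : Function.Injective fun v => maxColor (pe.1 (pe.2 v)) :=
          hinj.comp pe.2.injective
        exact (hinj2 h2).symm ▸ rfl
      have h1 : (fun v => pe.1 (pe.2 (Tuple.sort (fun v => maxColor (pe.1 (pe.2 v))) v)))
          = pe.1 := by
        rw [hsort]; funext v; simp
      have h2 : (Tuple.sort (fun v => maxColor (pe.1 (pe.2 v))))⁻¹ = pe.2 := by
        rw [hsort]; simp
      exact Prod.ext h1 h2
    -- h
    · intro κ hκ
      simp only
      have hsm : StrictMono fun u => maxColor (κ (Tuple.sort (fun v => maxColor (κ v)) u)) := by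
        apply Monotone.strictMono_of_injective
        · exact Tuple.monotone_sort (fun v => maxColor (κ v))
        · exact (maxColor_injective hκ).comp (Tuple.sort (fun v => maxColor (κ v))).injective
      have hf : (fun v => maxColor (κ v))
          = fun v => (fun u => maxColor (κ (Tuple.sort (fun v => maxColor (κ v)) u)))
              ((Tuple.sort (fun v => maxColor (κ v)))⁻¹ v) := by
        funext v; simp
      congr 1
      conv_lhs => rw [hf]
      exact ascF_comp hsm _
  rw [key, Finset.sum_product]
  rw [Finset.sum_congr rfl (fun κ0 _ => sum_X_pow_ascF n), Finset.sum_const, nsmul_eq_mul]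

-- ### the order embedding of `Fin s.card` into `s`

def semb (s : Finset ℕ+) : Fin s.card ↪o ℕ+ := s.orderEmbOfFin rfl

lemma semb_mem (s : Finset ℕ+) (x : Fin s.card) : semb s x ∈ s :=
  Finset.orderEmbOfFin_mem s rfl x

lemma semb_surj {s : Finset ℕ+} {i : ℕ+} (hi : i ∈ s) : ∃ x, semb s x = i := by
  have h := Finset.range_orderEmbOfFin s rfl
  have : i ∈ Set.range (s.orderEmbOfFin rfl) := by rw [h]; exact hi
  exact this

-- ### maxima of parts

def maxN {r : ℕ} (t : Finset (Fin r)) : ℕ := t.sup Fin.val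

lemma maxN_mem {r : ℕ} {t : Finset (Fin r)} (h : t.Nonempty) : ∃ x ∈ t, (x : ℕ) = maxN t := by
  obtain ⟨b, hb, he⟩ := Finset.exists_mem_eq_sup t h Fin.val
  exact ⟨b, hb, he.symm⟩

lemma le_maxN {r : ℕ} {t : Finset (Fin r)} {x : Fin r} (hx : x ∈ t) : (x : ℕ) ≤ maxN t :=
  Finset.le_sup hx

lemma maxN_injOn {r : ℕ} (P : Finpartition (univ : Finset (Fin r))) :
    Set.InjOn maxN (P.parts : Set (Finset (Fin r))) := by
  intro t1 h1 t2 h2 he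
  by_contra hne
  obtain ⟨x1, hx1, hv1⟩ := maxN_mem (P.nonempty_of_mem_parts h1)
  obtain ⟨x2, hx2, hv2⟩ := maxN_mem (P.nonempty_of_mem_parts h2)
  have hx : x1 = x2 := Fin.val_injective (by rw [hv1, hv2, he])
  subst hx
  exact (Finset.disjoint_left.mp (P.disjoint h1 h2 hne) hx1) hx2

lemma card_maxes {r n : ℕ} (P : Finpartition (univ : Finset (Fin r)))
    (hP : P.parts.card = n) : (P.parts.image maxN).card = n := by
  rw [Finset.card_image_of_injOn (maxN_injOn P), hP]

def mth {r n : ℕ} (P : Finpartition (univ : Finset (Fin r))) (hP : P.parts.card = n)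
    (v : Fin n) : ℕ :=
  (P.parts.image maxN).orderEmbOfFin (card_maxes P hP) v

lemma mth_strictMono {r n : ℕ} (P : Finpartition (univ : Finset (Fin r)))
    (hP : P.parts.card = n) : StrictMono (mth P hP) :=
  (Finset.orderEmbOfFin _ _).strictMono

lemma mth_mem {r n : ℕ} (P : Finpartition (univ : Finset (Fin r))) (hP : P.parts.card = n)
    (v : Fin n) : mth P hP v ∈ P.parts.image maxN :=
  Finset.orderEmbOfFin_mem _ _ _

lemma mth_surj {r n : ℕ} (P : Finpartition (univ : Finset (Fin r))) (hP : P.parts.card = n)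
    {c : ℕ} (hc : c ∈ P.parts.image maxN) : ∃ v, mth P hP v = c := by
  have h := Finset.range_orderEmbOfFin (P.parts.image maxN) (card_maxes P hP)
  have : c ∈ Set.range ((P.parts.image maxN).orderEmbOfFin (card_maxes P hP)) := by
    rw [h]; exact hc
  exact this

lemma exu {r n : ℕ} (P : Finpartition (univ : Finset (Fin r))) (hP : P.parts.card = n)
    (v : Fin n) : ∃! t, t ∈ P.parts ∧ maxN t = mth P hP v := by
  have h := mth_mem P hP v
  rw [Finset.mem_image] at h
  obtain ⟨t, ht, he⟩ := h
  exact ⟨t, ⟨ht, he⟩, fun t' ⟨ht', he'⟩ => maxN_injOn P ht' ht (he'.trans he.symm)⟩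

def partAt {r n : ℕ} (P : Finpartition (univ : Finset (Fin r))) (hP : P.parts.card = n)
    (v : Fin n) : Finset (Fin r) :=
  Finset.choose (fun t => maxN t = mth P hP v) P.parts (exu P hP v)

lemma partAt_mem {r n : ℕ} (P : Finpartition (univ : Finset (Fin r)))
    (hP : P.parts.card = n) (v : Fin n) : partAt P hP v ∈ P.parts :=
  Finset.choose_mem (fun t => maxN t = mth P hP v) P.parts (exu P hP v)

lemma maxN_partAt {r n : ℕ} (P : Finpartition (univ : Finset (Fin r)))
    (hP : P.parts.card = n) (v : Fin n) : maxN (partAt P hP v) = mth P hP v :=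
  Finset.choose_property (fun t => maxN t = mth P hP v) P.parts (exu P hP v)

lemma partAt_eq {r n : ℕ} {P : Finpartition (univ : Finset (Fin r))} {hP : P.parts.card = n}
    {v : Fin n} {t : Finset (Fin r)} (ht : t ∈ P.parts) (he : maxN t = mth P hP v) :
    partAt P hP v = t :=
  (exu P hP v).unique ⟨partAt_mem P hP v, maxN_partAt P hP v⟩ ⟨ht, he⟩

lemma partAt_injective {r n : ℕ} (P : Finpartition (univ : Finset (Fin r)))
    (hP : P.parts.card = n) : Function.Injective (partAt P hP) := by
  intro u v h
  have h2 : mth P hP u = mth P hP v := by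
    rw [← maxN_partAt P hP u, ← maxN_partAt P hP v, h]
  exact (mth_strictMono P hP).injective h2

-- ### from partitions to sorted colorings

def fromP (s : Finset ℕ+) {n : ℕ} (P : Finpartition (univ : Finset (Fin s.card)))
    (hP : P.parts.card = n) : Fin n → Finset ℕ+ :=
  fun v => (partAt P hP v).image fun x => semb s x

lemma fromP_maxColor (s : Finset ℕ+) {n : ℕ} (P : Finpartition (univ : Finset (Fin s.card)))
    (hP : P.parts.card = n) (v : Fin n) :
    ∃ x ∈ partAt P hP v, semb s x = maxColor (fromP s P hP v) ∧ (x : ℕ) = mth P hP v := by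
  obtain ⟨x, hx, hval⟩ := maxN_mem (P.nonempty_of_mem_parts (partAt_mem P hP v))
  refine ⟨x, hx, ?_, by rw [hval, maxN_partAt]⟩
  symm
  apply maxColor_eq
  · exact Finset.mem_image_of_mem _ hx
  · intro i hi
    simp only [fromP, Finset.mem_image] at hi
    obtain ⟨y, hy, rfl⟩ := hi
    have : (y : ℕ) ≤ (x : ℕ) := by rw [hval]; exact le_maxN hy
    exact (semb s).le_iff_le.mpr this

lemma fromP_mem (s : Finset ℕ+) {n : ℕ} (P : Finpartition (univ : Finset (Fin s.card)))
    (hP : P.parts.card = n) : fromP s P hP ∈ scolorings s n := by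
  rw [scolorings, Finset.mem_filter]
  constructor
  · rw [mem_colorings]
    refine ⟨?_, ?_, ?_, ?_⟩
    · intro v i hi
      rw [fromP, Finset.mem_image] at hi
      obtain ⟨x, _, rfl⟩ := hi
      exact semb_mem s x
    · intro v
      exact (P.nonempty_of_mem_parts (partAt_mem P hP v)).image _
    · intro u v huv
      have hne : partAt P hP u ≠ partAt P hP v := fun h => huv (partAt_injective P hP h)
      have hd : Disjoint (partAt P hP u) (partAt P hP v) :=
        P.disjoint (partAt_mem P hP u) (partAt_mem P hP v) hne
      exact (Finset.disjoint_image ((semb s).injective : Function.Injective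
        fun x => semb s x)).mpr hd
    · intro i hi
      obtain ⟨x, rfl⟩ := semb_surj hi
      obtain ⟨t, ht, hxt⟩ := P.exists_mem (Finset.mem_univ x)
      have : maxN t ∈ P.parts.image maxN := Finset.mem_image_of_mem _ ht
      obtain ⟨v, hv⟩ := mth_surj P hP this
      refine ⟨v, ?_⟩
      have hpt : partAt P hP v = t := partAt_eq ht hv.symm
      rw [fromP, hpt]
      exact Finset.mem_image_of_mem _ hxt
  · intro u v huv
    obtain ⟨xu, _, hsu, hvu⟩ := fromP_maxColor s P hP u
    obtain ⟨xv, _, hsv, hvv⟩ := fromP_maxColor s P hP v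
    show maxColor (fromP s P hP u) < maxColor (fromP s P hP v)
    rw [← hsu, ← hsv]
    apply (semb s).lt_iff_lt.mpr
    have : (xu : ℕ) < (xv : ℕ) := by
      rw [hvu, hvv]; exact mth_strictMono P hP huv
    exact this

-- ### from colorings to partitions

def toPfun (s : Finset ℕ+) {n : ℕ} (κ : Fin n → Finset ℕ+) : Fin n → Finset (Fin s.card) :=
  fun v => univ.filter fun x => semb s x ∈ κ v

lemma toPfun_injective {s : Finset ℕ+} {n : ℕ} {κ : Fin n → Finset ℕ+}
    (hκ : κ ∈ colorings s n) : Function.Injective (toPfun s κ) := by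
  intro u v h
  by_contra hne
  obtain ⟨h1, h2, h3, h4⟩ := mem_colorings.mp hκ
  obtain ⟨i, hi⟩ := h2 u
  obtain ⟨x, hx⟩ := semb_surj (h1 u hi)
  have hxu : x ∈ toPfun s κ u := by
    rw [toPfun, Finset.mem_filter]
    exact ⟨Finset.mem_univ x, hx ▸ hi⟩
  rw [h, toPfun, Finset.mem_filter] at hxu
  exact Finset.disjoint_left.mp (h3 u v hne) hi (hx ▸ hxu.2)

def toP (s : Finset ℕ+) {n : ℕ} (κ : Fin n → Finset ℕ+) (hκ : κ ∈ colorings s n) :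
    Finpartition (univ : Finset (Fin s.card)) where
  parts := univ.image (toPfun s κ)
  supIndep := by
    rw [Finset.supIndep_iff_pairwiseDisjoint]
    intro a ha b hb hab
    rw [Finset.mem_coe, Finset.mem_image] at ha hb
    obtain ⟨u, -, rfl⟩ := ha
    obtain ⟨v, -, rfl⟩ := hb
    have huv : u ≠ v := fun h => hab (by rw [h])
    have h3 := (mem_colorings.mp hκ).2.2.1 u v huv
    simp only [Function.onFun, id]
    rw [Finset.disjoint_left]
    intro x hx1 hx2
    rw [toPfun, Finset.mem_filter] at hx1 hx2
    exact Finset.disjoint_left.mp h3 hx1.2 hx2.2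
  sup_parts := by
    rw [Finset.sup_image]
    ext x
    simp only [Finset.mem_sup, Finset.mem_univ, true_and, iff_true, Function.comp_apply, id_eq]
    obtain ⟨h1, h2, h3, h4⟩ := mem_colorings.mp hκ
    obtain ⟨v, hv⟩ := h4 (semb s x) (semb_mem s x)
    refine ⟨v, ?_⟩
    rw [toPfun, Finset.mem_filter]
    exact ⟨Finset.mem_univ x, hv⟩
  bot_notMem := by
    rw [Finset.bot_eq_empty, Finset.mem_image]
    rintro ⟨v, -, hv⟩
    obtain ⟨h1, h2, h3, h4⟩ := mem_colorings.mp hκ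
    obtain ⟨i, hi⟩ := h2 v
    obtain ⟨x, hx⟩ := semb_surj (h1 v hi)
    have : x ∈ toPfun s κ v := by
      rw [toPfun, Finset.mem_filter]
      exact ⟨Finset.mem_univ x, hx ▸ hi⟩
    rw [hv] at this
    exact Finset.notMem_empty x this

lemma toP_parts_card {s : Finset ℕ+} {n : ℕ} {κ : Fin n → Finset ℕ+}
    (hκ : κ ∈ colorings s n) : (toP s κ hκ).parts.card = n := by
  show (univ.image (toPfun s κ)).card = n
  rw [Finset.card_image_of_injective _ (toPfun_injective hκ), Finset.card_univ,
    Fintype.card_fin]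

-- ### the two identities

lemma fromP_toP {s : Finset ℕ+} {n : ℕ} {κ : Fin n → Finset ℕ+}
    (hκ : κ ∈ scolorings s n) :
    fromP s (toP s κ (Finset.mem_of_mem_filter _ hκ)) (toP_parts_card _) = κ := by
  have hc : κ ∈ colorings s n := Finset.mem_of_mem_filter _ hκ
  have hsm : StrictMono fun v => maxColor (κ v) := (Finset.mem_filter.mp hκ).2
  obtain ⟨hsub, hne, hdis, hcov⟩ := mem_colorings.mp hc
  -- the max elements
  have hx0 : ∀ v, ∃ x : Fin s.card, semb s x = maxColor (κ v) := fun v =>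
    semb_surj (hsub v (maxColor_mem (hne v)))
  choose x0 hx0 using hx0
  have hmaxN : ∀ v, maxN (toPfun s κ v) = (x0 v : ℕ) := by
    intro v
    apply le_antisymm
    · apply Finset.sup_le
      intro x hx
      rw [toPfun, Finset.mem_filter] at hx
      have : semb s x ≤ semb s (x0 v) := by
        rw [hx0]; exact le_maxColor hx.2
      exact (semb s).le_iff_le.mp this
    · apply le_maxN
      rw [toPfun, Finset.mem_filter]
      exact ⟨Finset.mem_univ _, hx0 v ▸ maxColor_mem (hne v)⟩
  have hg : StrictMono fun v => (x0 v : ℕ) := by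
    intro u v huv
    have : semb s (x0 u) < semb s (x0 v) := by
      rw [hx0, hx0]; exact hsm huv
    exact (semb s).lt_iff_lt.mp this
  set P := toP s κ hc with hPdef
  have hP : P.parts.card = n := toP_parts_card hc
  have himg : P.parts.image maxN = univ.image fun v => (x0 v : ℕ) := by
    show (univ.image (toPfun s κ)).image maxN = _
    rw [Finset.image_image]
    apply Finset.image_congr
    intro v _
    exact hmaxN v
  have hmth : ∀ v, mth P hP v = (x0 v : ℕ) := by
    have huniq := Finset.orderEmbOfFin_unique (f := fun v => (x0 v : ℕ))
      (card_maxes P hP) (fun v => by rw [himg]; exact Finset.mem_image_of_mem _ (mem_univ v))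
      hg
    intro v
    rw [mth, ← congrFun huniq v]
  have hpart : ∀ v, partAt P hP v = toPfun s κ v := by
    intro v
    apply partAt_eq
    · exact Finset.mem_image_of_mem _ (mem_univ v)
    · rw [hmaxN v, hmth v]
  funext v
  show (partAt P hP v).image (fun x => semb s x) = κ v
  rw [hpart v]
  ext i
  simp only [Finset.mem_image, toPfun, Finset.mem_filter, Finset.mem_univ, true_and]
  constructor
  · rintro ⟨x, hx, rfl⟩; exact hx
  · intro hi
    obtain ⟨x, hx⟩ := semb_surj (hsub v hi)
    exact ⟨x, hx ▸ hi, hx⟩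

lemma toP_fromP {s : Finset ℕ+} {n : ℕ} (P : Finpartition (univ : Finset (Fin s.card)))
    (hP : P.parts.card = n) :
    toP s (fromP s P hP) (Finset.mem_of_mem_filter _ (fromP_mem s P hP)) = P := by
  apply Finpartition.ext
  have hfun : toPfun s (fromP s P hP) = partAt P hP := by
    funext v
    ext x
    rw [toPfun, Finset.mem_filter, fromP]
    simp only [Finset.mem_univ, true_and]
    exact ((semb s).injective.mem_finset_image
      (f := fun x => semb s x) (s := partAt P hP v) (a := x))
  show univ.image (toPfun s (fromP s P hP)) = P.parts
  rw [hfun]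
  apply Finset.eq_of_subset_of_card_le
  · intro t ht
    rw [Finset.mem_image] at ht
    obtain ⟨v, -, rfl⟩ := ht
    exact partAt_mem P hP v
  · rw [Finset.card_image_of_injective _ (partAt_injective P hP), Finset.card_univ,
      Fintype.card_fin, hP]

-- ### conclusion

lemma card_scolorings (s : Finset ℕ+) (n : ℕ) :
    (scolorings s n).card = stirling2 s.card n := by
  rw [stirling2, ← Nat.card_eq_finsetCard]
  apply Nat.card_congr
  exact {
    toFun := fun κ => ⟨toP s κ.1 (Finset.mem_of_mem_filter _ κ.2), toP_parts_card _⟩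
    invFun := fun P => ⟨fromP s P.1 P.2, fromP_mem s P.1 P.2⟩
    left_inv := fun κ => Subtype.ext (fromP_toP κ.2)
    right_inv := fun P => Subtype.ext (toP_fromP P.1 P.2) }

-- ### glue lemmas

lemma kqL_apply {V : Type*} [Preorder V] (G : SimpleGraph V) (m : ℕ+ →₀ ℕ) :
    kqL G m = ∑ᶠ κ : {κ : V → Finset ℕ+ // IsProperSV G κ ∧ MonoMatch κ m},
      (Polynomial.X : Polynomial ℤ) ^ ascNum G (fun v => maxColor (κ.1 v)) := rfl

lemma ascNum_top {n : ℕ} (f : Fin n → ℕ+) :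
    ascNum (⊤ : SimpleGraph (Fin n)) f = ascF f := by
  rw [ascNum, Nat.card_eq_fintype_card, Fintype.card_subtype, ascF]
  congr 1
  apply Finset.filter_congr
  intro p _
  simp only [SimpleGraph.top_adj]
  constructor
  · rintro ⟨-, h2, h3⟩; exact ⟨h2, h3⟩
  · rintro ⟨h2, h3⟩; exact ⟨ne_of_lt h2, h2, h3⟩

lemma colorings_eq_empty {s : Finset ℕ+} {n : ℕ} (h : s.card < n) : colorings s n = ∅ := by
  rw [Finset.eq_empty_iff_forall_notMem]
  intro κ hκ
  obtain ⟨h1, h2, h3, h4⟩ := mem_colorings.mp hκ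
  choose g hg using h2
  have hinj : Set.InjOn g ↑(univ : Finset (Fin n)) := by
    intro u _ v _ he
    by_contra hne
    exact Finset.disjoint_left.mp (h3 u v hne) (hg u) (he ▸ hg v)
  have := Finset.card_le_card_of_injOn g (fun v _ => h1 v (hg v)) hinj
  rw [Finset.card_univ, Fintype.card_fin] at this
  omega

lemma pred_iff_mem {n : ℕ} {m : ℕ+ →₀ ℕ} (hsq : ∀ i, m i ≤ 1)
    (κ : Fin n → Finset ℕ+) :
    (IsProperSV (⊤ : SimpleGraph (Fin n)) κ ∧ MonoMatch κ m) ↔ κ ∈ colorings m.support n := by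
  constructor
  · rintro ⟨⟨hne, hd⟩, hmm⟩
    rw [mem_colorings]
    have hdis : ∀ u v : Fin n, u ≠ v → Disjoint (κ u) (κ v) := fun u v huv =>
      hd ((SimpleGraph.top_adj u v).mpr huv)
    refine ⟨?_, hne, hdis, ?_⟩
    · intro v i hi
      rw [Finsupp.mem_support_iff, hmm i]
      have hne' : Nonempty {w : Fin n // i ∈ κ w} := ⟨⟨v, hi⟩⟩
      have := Nat.card_pos (α := {w : Fin n // i ∈ κ w})
      omega
    · intro i hi
      rw [Finsupp.mem_support_iff, hmm i] at hi
      by_contra hno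
      push_neg at hno
      have : IsEmpty {w : Fin n // i ∈ κ w} := ⟨fun ⟨w, hw⟩ => hno w hw⟩
      exact hi (Nat.card_of_isEmpty)
  · intro hκ
    obtain ⟨h1, h2, h3, h4⟩ := mem_colorings.mp hκ
    refine ⟨⟨h2, fun u v huv => h3 u v ((SimpleGraph.top_adj u v).mp huv)⟩, ?_⟩
    intro i
    by_cases hi : i ∈ m.support
    · have hm1 : m i = 1 := by
        have := hsq i
        have h0 : m i ≠ 0 := Finsupp.mem_support_iff.mp hi
        omega
      rw [hm1]
      symm
      rw [Nat.card_eq_one_iff_unique]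
      constructor
      · constructor
        rintro ⟨w1, p1⟩ ⟨w2, p2⟩
        apply Subtype.ext
        by_contra hne12
        exact Finset.disjoint_left.mp (h3 w1 w2 (by simpa using hne12)) p1 p2
      · obtain ⟨v, hv⟩ := h4 i hi
        exact ⟨⟨v, hv⟩⟩
    · have : IsEmpty {w : Fin n // i ∈ κ w} := by
        constructor
        rintro ⟨w, hw⟩
        exact hi (h1 w hw)
      rw [Finsupp.notMem_support_iff.mp hi, Nat.card_of_isEmpty]

/-- `L̄_{K_n}(q) = [n]_q! · Σ_{r ≥ n} {r brace n} e_r`. -/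
theorem kqL_completeGraph (n : ℕ) (hn : 0 < n) (m : ℕ+ →₀ ℕ) :
    MvPowerSeries.coeff (R := Polynomial ℤ) m (kqL (⊤ : SimpleGraph (Fin n))) =
      qFactorial n *
        ∑ᶠ (r : ℕ) (_ : n ≤ r),
          (stirling2 r n : Polynomial ℤ) *
            MvPowerSeries.coeff (R := Polynomial ℤ) m (elemSymP r) := by
  rw [MvPowerSeries.coeff_apply]
  by_cases hsq : ∀ i : ℕ+, m i ≤ 1
  · -- the squarefree case
    set r := m.support.card with hr
    -- evaluate the right-hand side
    have hco : ∀ r' : ℕ, MvPowerSeries.coeff (R := Polynomial ℤ) m (elemSymP r')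
        = if (∀ i, m i ≤ 1) ∧ m.support.card = r' then 1 else 0 := fun r' => by
      rw [MvPowerSeries.coeff_apply]; rfl
    have hinner : ∀ r' : ℕ,
        (∑ᶠ _ : n ≤ r', (stirling2 r' n : Polynomial ℤ)
          * MvPowerSeries.coeff (R := Polynomial ℤ) m (elemSymP r'))
        = if n ≤ r' ∧ r' = r then (stirling2 r n : Polynomial ℤ) else 0 := by
      intro r'
      rw [finsum_eq_if, hco r']
      by_cases h2 : m.support.card = r'
      · have hA : ((∀ i, m i ≤ 1) ∧ m.support.card = r') := ⟨hsq, h2⟩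
        have hrr : r' = r := (hr.trans h2).symm
        rw [if_pos hA, mul_one]
        by_cases h1 : n ≤ r'
        · rw [if_pos h1, if_pos (show n ≤ r' ∧ r' = r from ⟨h1, hrr⟩), hrr]
        · rw [if_neg h1, if_neg (show ¬(n ≤ r' ∧ r' = r) from fun h => h1 h.1)]
      · have hA : ¬((∀ i, m i ≤ 1) ∧ m.support.card = r') := fun h => h2 h.2
        rw [if_neg hA, mul_zero, ite_self,
          if_neg (show ¬(n ≤ r' ∧ r' = r) from fun h => h2 (by rw [← hr]; exact h.2.symm))]
    have houter : (∑ᶠ r' : ℕ, ∑ᶠ _ : n ≤ r', (stirling2 r' n : Polynomial ℤ)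
          * MvPowerSeries.coeff (R := Polynomial ℤ) m (elemSymP r'))
        = if n ≤ r then (stirling2 r n : Polynomial ℤ) else 0 := by
      rw [finsum_congr hinner]
      rw [finsum_eq_single _ r (fun r' hr' => if_neg (fun h => hr' h.2))]
      by_cases h1 : n ≤ r
      · rw [if_pos ⟨h1, rfl⟩, if_pos h1]
      · rw [if_neg (fun h => h1 h.1), if_neg h1]
    rw [houter]
    -- evaluate the left-hand side
    have hset : {κ : Fin n → Finset ℕ+ |
        IsProperSV (⊤ : SimpleGraph (Fin n)) κ ∧ MonoMatch κ m}
        = ↑(colorings m.support n) := Set.ext fun κ => pred_iff_mem hsq κ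
    have h1 : kqL (⊤ : SimpleGraph (Fin n)) m
        = ∑ᶠ κ ∈ {κ : Fin n → Finset ℕ+ |
            IsProperSV (⊤ : SimpleGraph (Fin n)) κ ∧ MonoMatch κ m},
          (Polynomial.X : Polynomial ℤ) ^ ascNum (⊤ : SimpleGraph (Fin n))
            (fun v => maxColor (κ v)) := by
      rw [kqL_apply]
      exact finsum_set_coe_eq_finsum_mem
        (f := fun κ : Fin n → Finset ℕ+ => (Polynomial.X : Polynomial ℤ)
          ^ ascNum (⊤ : SimpleGraph (Fin n)) (fun v => maxColor (κ v))) _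
    rw [h1, hset, finsum_mem_coe_finset]
    have h2 : ∀ κ ∈ colorings m.support n,
        (Polynomial.X : Polynomial ℤ) ^ ascNum (⊤ : SimpleGraph (Fin n))
          (fun v => maxColor (κ v))
        = (Polynomial.X : Polynomial ℤ) ^ ascF (fun v => maxColor (κ v)) := fun κ _ => by
      rw [ascNum_top]
    rw [Finset.sum_congr rfl h2, sum_colorings, card_scolorings]
    by_cases h3 : n ≤ r
    · rw [if_pos h3, ← hr, mul_comm]
    · rw [if_neg h3, mul_zero, ← card_scolorings]
      have hemp : scolorings m.support n = ∅ := by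
        rw [scolorings, colorings_eq_empty (s := m.support) (n := n) (by omega),
          Finset.filter_empty]
      rw [hemp, Finset.card_empty]
      simp
  · -- not squarefree: both sides vanish
    have hempty : IsEmpty {κ : Fin n → Finset ℕ+ //
        IsProperSV (⊤ : SimpleGraph (Fin n)) κ ∧ MonoMatch κ m} := by
      constructor
      rintro ⟨κ, ⟨hne, hd⟩, hmm⟩
      apply hsq
      intro i
      rw [hmm i]
      have : Subsingleton {w : Fin n // i ∈ κ w} := by
        constructor
        rintro ⟨w1, p1⟩ ⟨w2, p2⟩
        apply Subtype.ext
        by_contra hne12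
        exact Finset.disjoint_left.mp (hd ((SimpleGraph.top_adj w1 w2).mpr (by simpa using hne12))) p1 p2
      rw [Nat.card_eq_fintype_card]
      exact Fintype.card_le_one_iff_subsingleton.mpr this
    have hL : kqL (⊤ : SimpleGraph (Fin n)) m = 0 := by
      rw [kqL_apply]
      exact finsum_of_isEmpty _
    have h0 : ∀ r' : ℕ, ((stirling2 r' n : Polynomial ℤ)
        * MvPowerSeries.coeff (R := Polynomial ℤ) m (elemSymP r')) = 0 := fun r' => by
      rw [MvPowerSeries.coeff_apply]
      show _ * (if (∀ i, m i ≤ 1) ∧ m.support.card = r' then (1 : Polynomial ℤ) else 0) = 0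
      rw [if_neg (fun h => hsq h.1), mul_zero]
    simp only [h0, finsum_zero, mul_zero]
    exact hL
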